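/- arXiv:1706.08681 — 2 statements merged into one kernel-verified Lean document; each statement's English description precedes it below -/
import Mathlib

section
/- Let (X_n, n≥1) be i.i.d. positive random variables with density P(X_1 ∈ dx) = (ln 2)/(x ln²x) 1_{x≥2} dx. Then for every a > 0 with a < 1 and every λ > 0, 1 - E[exp(-λ X_1 a^n)] ∼ -ln(2)/(n ln a) as n → ∞, and consequently ∑_{n≥1} X_n a^n = +∞ almost surely. -/
/-!
The tail of `X₁` is `P(X₁ ≥ M) = log 2 / log M`. For a nonnegative variable, splitting at a level
`M` gives `(1 - e^{-tM}) P(X ≥ M) ≤ 1 - E e^{-tX} ≤ tM + P(X ≥ M)`; taking `M = s e^s` in the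
lower bound and `M = e^s / s²` in the upper one, with `t = e^{-s}`, squeezes `s (1 - E e^{-tX})`
to `log 2`, and `t = λ aⁿ` corresponds to `s ≈ -n log a`.

For the series, the independent events `Xₘ aᵐ ≥ 2` have probabilities `log 2 / (log 2 - m log a)`,
whose sum diverges, so by the second Borel–Cantelli lemma infinitely many terms are `≥ 2`.
-/

open MeasureTheory ProbabilityTheory Filter Set Real Topology

lemma hasDerivAt_neg_inv_log {x : ℝ} (hx : 1 < x) :
    HasDerivAt (fun y => -(log y)⁻¹) (x * log x ^ 2)⁻¹ x := by
  have hlog : log x ≠ 0 := (log_pos hx).ne'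
  refine ((hasDerivAt_log (by linarith)).inv hlog).neg.congr_deriv ?_
  rw [neg_div, neg_neg, mul_inv, div_eq_mul_inv]

lemma tendsto_neg_inv_log_atTop : Tendsto (fun y => -(log y)⁻¹) atTop (𝓝 0) := by
  simpa using (tendsto_inv_atTop_zero.comp tendsto_log_atTop).neg

lemma inv_mul_log_sq_nonneg {x : ℝ} (hx : 1 < x) : 0 ≤ (x * log x ^ 2)⁻¹ := by
  have := log_pos hx
  positivity

lemma integrableOn_Ioi_inv_mul_log_sq {M : ℝ} (hM : 1 < M) :
    IntegrableOn (fun x => (x * log x ^ 2)⁻¹) (Ioi M) :=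
  integrableOn_Ioi_deriv_of_nonneg' (fun _ hx => hasDerivAt_neg_inv_log (hM.trans_le hx))
    (fun _ hx => inv_mul_log_sq_nonneg (hM.trans hx)) tendsto_neg_inv_log_atTop

lemma integral_Ioi_inv_mul_log_sq {M : ℝ} (hM : 1 < M) :
    ∫ x in Ioi M, (x * log x ^ 2)⁻¹ = (log M)⁻¹ := by
  rw [integral_Ioi_of_hasDerivAt_of_nonneg' (fun _ hx => hasDerivAt_neg_inv_log (hM.trans_le hx))
    (fun _ hx => inv_mul_log_sq_nonneg (hM.trans hx)) tendsto_neg_inv_log_atTop]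
  ring

lemma withDensity_log_Ici {M : ℝ} (hM : 2 ≤ M) :
    volume.withDensity (fun x => ENNReal.ofReal
      (indicator {y : ℝ | 2 ≤ y} (fun y => log 2 / (y * log y ^ 2)) x)) (Ici M)
      = ENNReal.ofReal (log 2 / log M) := by
  have hM1 : 1 < M := by linarith
  rw [withDensity_apply _ measurableSet_Ici,
    setLIntegral_congr_fun measurableSet_Ici
      (g := fun x => ENNReal.ofReal (log 2 * (x * log x ^ 2)⁻¹))
      fun x hx => by
        rw [indicator_of_mem (show x ∈ {y : ℝ | 2 ≤ y} from hM.trans hx), div_eq_mul_inv],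
    ← ofReal_integral_eq_lintegral_ofReal, integral_Ici_eq_integral_Ioi, integral_const_mul,
    integral_Ioi_inv_mul_log_sq hM1, div_eq_mul_inv]
  · exact ((integrableOn_Ici_iff_integrableOn_Ioi).2
      (integrableOn_Ioi_inv_mul_log_sq hM1)).const_mul _
  · refine ae_restrict_of_forall_mem measurableSet_Ici fun x hx => ?_
    exact mul_nonneg (log_nonneg one_le_two) (inv_mul_log_sq_nonneg (hM1.trans_le hx))

section LogTail

variable {Ω : Type*} [MeasurableSpace Ω] {μ : Measure Ω} {Y : Ω → ℝ}

lemma measure_le_eq_of_map_eq (hY : Measurable Y)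
    (hlaw : μ.map Y = volume.withDensity (fun x => ENNReal.ofReal
      (indicator {y : ℝ | 2 ≤ y} (fun y => log 2 / (y * log y ^ 2)) x)))
    {M : ℝ} (hM : 2 ≤ M) : μ {ω | M ≤ Y ω} = ENNReal.ofReal (log 2 / log M) := by
  rw [← withDensity_log_Ici hM, ← hlaw, Measure.map_apply hY measurableSet_Ici]
  rfl

lemma ae_two_le_of_map_eq [IsProbabilityMeasure μ] (hY : Measurable Y)
    (hlaw : μ.map Y = volume.withDensity (fun x => ENNReal.ofReal
      (indicator {y : ℝ | 2 ≤ y} (fun y => log 2 / (y * log y ^ 2)) x))) :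
    ∀ᵐ ω ∂μ, 2 ≤ Y ω := by
  refine (mem_ae_iff_prob_eq_one (measurableSet_le measurable_const hY)).2 ?_
  rw [measure_le_eq_of_map_eq hY hlaw le_rfl, div_self (log_pos one_lt_two).ne',
    ENNReal.ofReal_one]

end LogTail

lemma tendsto_div_add_mul_log (k : ℝ) : Tendsto (fun s => s / (s + k * log s)) atTop (𝓝 1) := by
  have h := (tendsto_const_nhds (x := (1 : ℝ)).add
    (isLittleO_log_id_atTop.tendsto_div_nhds_zero.const_mul k)).inv₀ (by simp)
  simp only [mul_zero, add_zero, inv_one, id] at h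
  refine h.congr' ?_
  filter_upwards [eventually_gt_atTop 0] with s hs
  rw [show 1 + k * (log s / s) = (s + k * log s) / s by field_simp, inv_div]

section Laplace

variable {Ω : Type*} [MeasurableSpace Ω] {μ : Measure Ω} [IsProbabilityMeasure μ] {X : Ω → ℝ}

lemma integrable_exp_neg_mul_of_nonneg (hX : Measurable X) (hX0 : ∀ᵐ ω ∂μ, 0 ≤ X ω) {t : ℝ}
    (ht : 0 ≤ t) : Integrable (fun ω => exp (-t * X ω)) μ := by
  refine .of_mem_Icc 0 1 (by fun_prop) ?_
  filter_upwards [hX0] with ω hω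
  exact ⟨(exp_pos _).le, exp_le_one_iff.2 (by nlinarith)⟩

lemma one_sub_mgf_neg_eq_integral (hX : Measurable X) (hX0 : ∀ᵐ ω ∂μ, 0 ≤ X ω) {t : ℝ}
    (ht : 0 ≤ t) : 1 - mgf X μ (-t) = ∫ ω, (1 - exp (-t * X ω)) ∂μ := by
  rw [mgf, integral_sub (integrable_const 1) (integrable_exp_neg_mul_of_nonneg hX hX0 ht)]
  simp

lemma one_sub_mgf_neg_le (hX : Measurable X) (hX0 : ∀ᵐ ω ∂μ, 0 ≤ X ω) {t M : ℝ} (ht : 0 ≤ t)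
    (hM : 0 ≤ M) : 1 - mgf X μ (-t) ≤ t * M + μ.real {ω | M ≤ X ω} := by
  have hs : MeasurableSet {ω | M ≤ X ω} := measurableSet_le measurable_const hX
  have hind : Integrable ({ω | M ≤ X ω}.indicator (1 : Ω → ℝ)) μ :=
    (integrable_const 1).indicator hs
  calc 1 - mgf X μ (-t) = ∫ ω, (1 - exp (-t * X ω)) ∂μ := one_sub_mgf_neg_eq_integral hX hX0 ht
    _ ≤ ∫ ω, (t * M + {ω | M ≤ X ω}.indicator 1 ω) ∂μ :=
      integral_mono ((integrable_const 1).sub (integrable_exp_neg_mul_of_nonneg hX hX0 ht))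
        ((integrable_const _).add hind) fun ω => ?_
    _ = t * M + μ.real {ω | M ≤ X ω} := by
      rw [integral_add (integrable_const _) hind, integral_indicator_one hs]
      simp
  by_cases h : M ≤ X ω
  · simp only [indicator_of_mem (show ω ∈ {ω | M ≤ X ω} from h), Pi.one_apply]
    nlinarith [exp_pos (-t * X ω), mul_nonneg ht hM]
  · simp only [indicator_of_notMem (show ω ∉ {ω | M ≤ X ω} from h), add_zero]
    have := mul_le_mul_of_nonneg_left (not_le.1 h).le ht
    rw [neg_mul]
    linarith [one_sub_le_exp_neg (t * X ω)]

lemma mul_le_one_sub_mgf_neg (hX : Measurable X) (hX0 : ∀ᵐ ω ∂μ, 0 ≤ X ω) {t M : ℝ}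
    (ht : 0 ≤ t) : (1 - exp (-(t * M))) * μ.real {ω | M ≤ X ω} ≤ 1 - mgf X μ (-t) := by
  have hs : MeasurableSet {ω | M ≤ X ω} := measurableSet_le measurable_const hX
  rw [one_sub_mgf_neg_eq_integral hX hX0 ht, mul_comm, ← smul_eq_mul,
    ← integral_indicator_const _ hs]
  refine integral_mono_ae ((integrable_const _).indicator hs)
    ((integrable_const 1).sub (integrable_exp_neg_mul_of_nonneg hX hX0 ht)) ?_
  filter_upwards [hX0] with ω hω
  by_cases h : M ≤ X ω
  · rw [indicator_of_mem (show ω ∈ {ω | M ≤ X ω} from h)]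
    have : exp (-t * X ω) ≤ exp (-(t * M)) := exp_le_exp.2 (by nlinarith)
    linarith
  · rw [indicator_of_notMem (show ω ∉ {ω | M ≤ X ω} from h), sub_nonneg]
    exact exp_le_one_iff.2 (by nlinarith)

lemma tendsto_mul_one_sub_mgf_neg_exp_neg (hX : Measurable X) (hX0 : ∀ᵐ ω ∂μ, 0 ≤ X ω) {c : ℝ}
    (htail : Tendsto (fun M => μ.real {ω | M ≤ X ω} * log M) atTop (𝓝 c)) :
    Tendsto (fun s => s * (1 - mgf X μ (-exp (-s)))) atTop (𝓝 c) := by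
  set G : ℝ → ℝ := fun M => μ.real {ω | M ≤ X ω}
  have hlower : Tendsto (fun s => (1 - exp (-s)) * (G (s * exp s) * log (s * exp s))
      * (s / (s + log s))) atTop (𝓝 c) := by
    simpa [G] using ((tendsto_const_nhds (x := (1 : ℝ)).sub tendsto_exp_neg_atTop_nhds_zero).mul
      (htail.comp (tendsto_id.atTop_mul_atTop₀ tendsto_exp_atTop))).mul
      (tendsto_div_add_mul_log 1)
  have hupper : Tendsto (fun s => s⁻¹ + G (exp s / s ^ 2) * log (exp s / s ^ 2)
      * (s / (s - 2 * log s))) atTop (𝓝 c) := by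
    simpa [G, ← sub_eq_add_neg] using tendsto_inv_atTop_zero.add
      ((htail.comp (tendsto_exp_div_pow_atTop 2)).mul (tendsto_div_add_mul_log (-2)))
  refine tendsto_of_tendsto_of_tendsto_of_le_of_le' hlower hupper ?_ ?_
  · filter_upwards [eventually_ge_atTop 1] with s hs
    have hlog : log (s * exp s) = s + log s := by
      rw [log_mul (by positivity) (exp_pos s).ne', log_exp, add_comm]
    have hpos : 0 < s + log s := by linarith [log_nonneg hs]
    have h := mul_le_one_sub_mgf_neg hX hX0 (exp_pos (-s)).le (M := s * exp s)
    rw [show exp (-s) * (s * exp s) = s by rw [exp_neg]; field_simp] at h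
    calc _ = s * ((1 - exp (-s)) * G (s * exp s)) := by rw [hlog]; field_simp [hpos.ne']
      _ ≤ s * (1 - mgf X μ (-exp (-s))) := mul_le_mul_of_nonneg_left h (by linarith)
  · filter_upwards [eventually_gt_atTop 0, (tendsto_exp_div_pow_atTop 2).eventually_ge_atTop 2]
      with s hs hK
    have hlog : log (exp s / s ^ 2) = s - 2 * log s := by
      rw [log_div (exp_pos s).ne' (by positivity), log_exp, log_pow, Nat.cast_ofNat]
    have hpos : 0 < s - 2 * log s := hlog ▸ log_pos (by linarith)
    have h := one_sub_mgf_neg_le hX hX0 (exp_pos (-s)).le (by linarith : 0 ≤ exp s / s ^ 2)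
    rw [show exp (-s) * (exp s / s ^ 2) = (s ^ 2)⁻¹ by rw [exp_neg]; field_simp] at h
    calc s * (1 - mgf X μ (-exp (-s))) ≤ s * ((s ^ 2)⁻¹ + G (exp s / s ^ 2)) :=
          mul_le_mul_of_nonneg_left h hs.le
      _ = _ := by rw [hlog]; field_simp [hpos.ne']

end Laplace

lemma tendsto_mul_comp_mul_pow {f : ℝ → ℝ} {c : ℝ}
    (hf : Tendsto (fun s => s * f (exp (-s))) atTop (𝓝 c)) {a l : ℝ} (ha0 : 0 < a) (ha1 : a < 1)
    (hl : 0 < l) : Tendsto (fun n : ℕ => (n * -log a) * f (l * a ^ n)) atTop (𝓝 c) := by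
  set s : ℕ → ℝ := fun n => n * -log a - log l
  have hs : Tendsto s atTop atTop := tendsto_atTop_add_const_right _ _
    (tendsto_natCast_atTop_atTop.atTop_mul_const (neg_pos.2 (log_neg ha0 ha1)))
  have hexp (n : ℕ) : exp (-s n) = l * a ^ n := by
    rw [show -s n = log l + log (a ^ n) by rw [log_pow]; ring, exp_add, exp_log hl,
      exp_log (pow_pos ha0 n)]
  have hmul : Tendsto (fun n => s n * f (l * a ^ n)) atTop (𝓝 c) := by
    simpa only [Function.comp_def, hexp] using hf.comp hs
  have hzero : Tendsto (fun n => f (l * a ^ n)) atTop (𝓝 0) := by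
    refine (mul_zero c ▸ hmul.mul (tendsto_inv_atTop_zero.comp hs)).congr' ?_
    filter_upwards [hs.eventually_gt_atTop 0] with n hn
    simp only [Function.comp_apply]
    field_simp
  refine (add_zero c ▸ mul_zero (log l) ▸ hmul.add (hzero.const_mul (log l))).congr fun n => ?_
  simp only [s]
  ring

lemma not_summable_div_add_mul {c p q : ℝ} (hc : 0 < c) (hp : 0 < p) (hq : 0 < q) :
    ¬Summable fun n : ℕ => c / (p + q * n) := by
  intro h
  refine not_summable_one_div_natCast ((summable_nat_add_iff 1).1 ?_)
  refine (h.mul_left ((p + q) / c)).of_nonneg_of_le (fun n => by positivity) fun n => ?_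
  rw [div_mul_div_cancel₀ hc.ne', div_le_div_iff₀ (by positivity) (by positivity)]
  push_cast
  nlinarith

lemma tendsto_sum_range_atTop_of_frequently_le {f : ℕ → ℝ} {ε : ℝ} (hε : 0 < ε)
    (hf : ∀ n, 0 ≤ f n) (hfreq : ∃ᶠ n in atTop, ε ≤ f n) :
    Tendsto (fun N => ∑ n ∈ Finset.range N, f n) atTop atTop := by
  rw [← not_summable_iff_tendsto_nat_atTop_of_nonneg hf]
  exact fun hsum => hfreq ((hsum.tendsto_atTop_zero.eventually (gt_mem_nhds hε)).mono
    fun n hn => not_le.2 hn)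

lemma ProbabilityTheory.iIndepFun.ae_frequently_mem_of_tsum_eq_top {Ω β : Type*}
    [MeasurableSpace Ω] [MeasurableSpace β] {μ : Measure Ω} [IsProbabilityMeasure μ] {X : ℕ → Ω → β}
    (hX : ∀ n, Measurable (X n)) (hindep : iIndepFun X μ) {s : ℕ → Set β}
    (hs : ∀ n, MeasurableSet (s n)) (hsum : ∑' n, μ (X n ⁻¹' s n) = ⊤) :
    ∀ᵐ ω ∂μ, ∃ᶠ n in atTop, X n ω ∈ s n := by
  have hmeas (n : ℕ) : MeasurableSet (X n ⁻¹' s n) := hX n (hs n)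
  have hsets : iIndepSet (fun n => X n ⁻¹' s n) μ :=
    (iIndepSet_iff_meas_biInter hmeas).2 fun S =>
      hindep.measure_inter_preimage_eq_mul S fun n _ => hs n
  have hlimsup : limsup (fun n => X n ⁻¹' s n) atTop ∈ ae μ :=
    (mem_ae_iff_prob_eq_one (.measurableSet_limsup hmeas)).2
      (measure_limsup_eq_one hmeas hsets hsum)
  filter_upwards [hlimsup] with ω hω using mem_limsup_iff_frequently_mem.1 hω

theorem stmt_3
    {Ω : Type*} [MeasureSpace Ω] [IsProbabilityMeasure (ℙ : Measure Ω)]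
    (X : ℕ → Ω → ℝ)
    (hmeas : ∀ n, Measurable (X n))
    (hindep : iIndepFun X ℙ)
    (hident : ∀ n, IdentDistrib (X n) (X 1) ℙ ℙ)
    (hlaw : (ℙ : Measure Ω).map (X 1)
        = volume.withDensity (fun x => ENNReal.ofReal
            (Set.indicator {y : ℝ | 2 ≤ y}
              (fun y => Real.log 2 / (y * Real.log y ^ 2)) x)))
    (a : ℝ) (ha0 : 0 < a) (ha1 : a < 1) (l : ℝ) (hl : 0 < l) :
    Tendsto (fun n : ℕ =>
        (1 - ∫ ω, Real.exp (-l * X 1 ω * a ^ n) ∂ℙ)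
          / (-Real.log 2 / (n * Real.log a))) atTop (nhds 1)
    ∧ ∀ᵐ ω ∂(ℙ : Measure Ω),
        Tendsto (fun N : ℕ => ∑ n ∈ Finset.range N, X (n + 1) ω * a ^ (n + 1))
          atTop atTop := by
  have hlaw' (m : ℕ) := (hident m).map_eq.trans hlaw
  have hX0 (m : ℕ) : ∀ᵐ ω ∂ℙ, 0 ≤ X m ω :=
    (ae_two_le_of_map_eq (hmeas m) (hlaw' m)).mono fun _ h => zero_le_two.trans h
  have hlog2 : 0 < log 2 := log_pos one_lt_two
  have hloga : 0 < -log a := neg_pos.2 (log_neg ha0 ha1)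
  constructor
  · have htail :
        Tendsto (fun M => (ℙ : Measure Ω).real {ω | M ≤ X 1 ω} * log M) atTop (𝓝 (log 2)) := by
      refine tendsto_const_nhds.congr' ?_
      filter_upwards [eventually_ge_atTop 2] with M hM
      have hlogM : 0 < log M := log_pos (by linarith)
      rw [measureReal_def, measure_le_eq_of_map_eq (hmeas 1) hlaw hM,
        ENNReal.toReal_ofReal (by positivity), div_mul_cancel₀ _ hlogM.ne']
    have h := (tendsto_mul_comp_mul_pow (f := fun t => 1 - mgf (X 1) ℙ (-t))
      (tendsto_mul_one_sub_mgf_neg_exp_neg (hmeas 1) (hX0 1) htail) ha0 ha1 hl).div_const (log 2)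
    rw [div_self hlog2.ne'] at h
    refine h.congr fun n => ?_
    have hmgf : mgf (X 1) ℙ (-(l * a ^ n)) = ∫ ω, exp (-l * X 1 ω * a ^ n) ∂ℙ := by
      simp only [mgf]
      congr 1 with ω
      ring_nf
    rw [hmgf, div_div_eq_mul_div]
    ring
  · have hprob (m : ℕ) : ℙ (X m ⁻¹' Ici (2 / a ^ m))
        = ENNReal.ofReal (log 2 / (log 2 + -log a * m)) := by
      refine (measure_le_eq_of_map_eq (hmeas m) (hlaw' m)
        (le_div_self zero_le_two (pow_pos ha0 m) (pow_le_one₀ ha0.le ha1.le))).trans ?_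
      rw [log_div two_ne_zero (pow_pos ha0 m).ne', log_pow]
      ring_nf
    have hsum : ∑' m, ℙ (X m ⁻¹' Ici (2 / a ^ m)) = ⊤ := by
      by_contra h
      refine not_summable_div_add_mul hlog2 hlog2 hloga
        ((ENNReal.summable_toReal h).congr fun m => ?_)
      have := add_pos_of_pos_of_nonneg hlog2 (mul_nonneg hloga.le m.cast_nonneg)
      rw [hprob, ENNReal.toReal_ofReal (by positivity)]
    filter_upwards [hindep.ae_frequently_mem_of_tsum_eq_top hmeas (fun _ => measurableSet_Ici)
      hsum, ae_all_iff.2 hX0] with ω hfreq hω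
    refine tendsto_sum_range_atTop_of_frequently_le two_pos
      (fun n => mul_nonneg (hω _) (pow_nonneg ha0.le _)) ?_
    rw [← map_add_atTop_eq_nat 1, frequently_map] at hfreq
    exact hfreq.mono fun n hn => (div_le_iff₀ (pow_pos ha0 _)).1 hn
end

section
/- Let μ_0 be a probability measure on ℝ² and for t > 0 define the complex-valued function φ_t(ω, λ) = ∫∫ e^{iω(x+ut) + iλu} e^{-t ∫₀¹ |tωr + λ|^α dr} μ_0(dx, du), with α ∈ (0,2]. Then ∫∫_{ℝ²} |φ_t(ω,λ)| dλ dω ≤ (∫_ℝ (∫₀¹ |rt + s|^α dr)^{-2/α} ds)(∫_ℝ |w| e^{-t|w|^α} dw) < ∞ for every t > 0. -/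
open MeasureTheory intervalIntegral Real Set ENNReal

/-!
Since `μ₀` is a probability measure, `|φ ω λ|` is at most the damping factor
`exp (-t ∫₀¹ |tωr + λ|^α dr)`. Substituting `λ = ωs` turns the exponent into `t |ω|^α J(s)`,
where `J(s) = ∫₀¹ |rt + s|^α dr`, at the cost of a Jacobian `|ω|`; after Tonelli, the
substitution `ω = J(s)^(-1/α) w` factors the inner integral as
`J(s)^(-2/α) ∫ |w| exp (-t |w|^α) dw`. The second factor is a Gamma-type integral, and the
first is finite because `J` is continuous and positive with `J(s) ≥ (|s|/2)^α` for large `|s|`,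
so that `J^(-2/α) = O(s⁻²)`.
-/

theorem lintegral_eq_abs_mul_lintegral_comp_mul_left (f : ℝ → ℝ≥0∞) {a : ℝ} (ha : a ≠ 0) :
    ∫⁻ x, f x = ENNReal.ofReal |a| * ∫⁻ x, f (a * x) := by
  conv_lhs => rw [← Real.smul_map_volume_mul_left ha]
  rw [lintegral_smul_measure, smul_eq_mul]
  exact congrArg _ (lintegral_map_equiv f (Homeomorph.mulLeft₀ a ha).toMeasurableEquiv)

theorem integrable_comp_abs {E : Type*} [NormedAddCommGroup E] {f : ℝ → E}
    (hf : IntegrableOn f (Ioi 0)) : Integrable fun x => f |x| := by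
  have hpos : IntegrableOn (fun x => f |x|) (Ioi 0) :=
    hf.congr_fun (fun x hx => by rw [abs_of_pos hx]) measurableSet_Ioi
  rw [← integrableOn_univ, ← Iic_union_Ioi (a := (0 : ℝ)), integrableOn_union]
  refine ⟨?_, hpos⟩
  rw [← (Measure.measurePreserving_neg (volume : Measure ℝ)).integrableOn_comp_preimage
      (Homeomorph.neg ℝ).measurableEmbedding]
  simpa [Function.comp_def, integrableOn_Ici_iff_integrableOn_Ioi] using hpos

theorem norm_integral_exp_mul_I_mul_exp_neg_le {Ω : Type*} [MeasurableSpace Ω] (μ : Measure Ω)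
    [IsProbabilityMeasure μ] (g : Ω → ℝ) (c : ℝ) :
    ‖∫ p, Complex.exp (Complex.I * (g p : ℂ)) * Complex.exp (-(c : ℂ)) ∂μ‖ ≤ Real.exp (-c) := by
  simpa using norm_integral_le_of_norm_le_const (μ := μ) (C := Real.exp (-c))
    (f := fun p => Complex.exp (Complex.I * (g p : ℂ)) * Complex.exp (-(c : ℂ)))
    (ae_of_all _ fun p => by simp [Complex.norm_exp])

theorem integrable_abs_mul_exp_neg_mul_abs_rpow {α t : ℝ} (hα : 0 < α) (ht : 0 < t) :
    Integrable fun w : ℝ => |w| * Real.exp (-t * |w| ^ α) := by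
  simpa using integrable_comp_abs (integrableOn_rpow_mul_exp_neg_mul_rpow
    (s := 1) (by norm_num) hα ht)

theorem lintegral_abs_mul_comp_abs_rpow_mul (g : ℝ → ℝ) {α c : ℝ} (hα : α ≠ 0) (hc : 0 < c) :
    ∫⁻ ω, ENNReal.ofReal (|ω| * g (|ω| ^ α * c))
      = ENNReal.ofReal (c ^ (-(2 / α))) * ∫⁻ w, ENNReal.ofReal (|w| * g (|w| ^ α)) := by
  set a := c ^ (-(1 / α))
  have ha : 0 < a := rpow_pos_of_pos hc _
  have haα : a ^ α * c = 1 := by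
    rw [← rpow_mul hc.le, neg_mul, one_div_mul_cancel hα, Real.rpow_neg_one, inv_mul_cancel₀ hc.ne']
  have hsq : a * a = c ^ (-(2 / α)) := by
    rw [← rpow_add hc]
    ring_nf
  rw [lintegral_eq_abs_mul_lintegral_comp_mul_left _ ha.ne', abs_of_pos ha, ← hsq,
    ofReal_mul ha.le, mul_assoc]
  congr 1
  rw [← lintegral_const_mul' _ _ ofReal_ne_top]
  refine lintegral_congr fun w => ?_
  rw [← ofReal_mul ha.le, abs_mul, abs_of_pos ha, mul_rpow ha.le (abs_nonneg w),
    mul_right_comm (a ^ α), haα, one_mul, mul_assoc]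

noncomputable def segmentRpowIntegral (α t s : ℝ) : ℝ := ∫ r in (0:ℝ)..1, |r * t + s| ^ α

section segmentRpowIntegral

variable {α t : ℝ}

theorem continuous_segmentRpowIntegral (hα : 0 ≤ α) (t : ℝ) :
    Continuous (segmentRpowIntegral α t) :=
  continuous_parametric_intervalIntegral_of_continuous' (by fun_prop (disch := simp [hα])) 0 1

theorem segmentRpowIntegral_pos (hα : 0 ≤ α) (ht : t ≠ 0) (s : ℝ) :
    0 < segmentRpowIntegral α t s := by
  have hpoint : ∃ c ∈ Icc (0:ℝ) 1, 0 < |c * t + s| ^ α := by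
    by_cases hs : s = 0
    · exact ⟨1, by simp, by simp [hs, ht, rpow_pos_of_pos]⟩
    · exact ⟨0, by simp, by simp [hs, rpow_pos_of_pos]⟩
  exact intervalIntegral.integral_pos zero_lt_one (by fun_prop (disch := simp [hα]))
    (fun r _ => by positivity) hpoint

theorem rpow_half_abs_le_segmentRpowIntegral (hα : 0 ≤ α) {s : ℝ} (hs : 2 * |t| ≤ |s|) :
    (|s| / 2) ^ α ≤ segmentRpowIntegral α t s := by
  have hconst : (|s| / 2) ^ α = ∫ _ in (0:ℝ)..1, (|s| / 2) ^ α := by simp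
  rw [hconst]
  refine integral_mono_on zero_le_one intervalIntegrable_const
    (by apply Continuous.intervalIntegrable; fun_prop (disch := simp [hα])) fun r hr => ?_
  refine rpow_le_rpow (by positivity) ?_ hα
  have hrt : |r * t| ≤ |t| := by
    rw [abs_mul, abs_of_nonneg hr.1]
    exact mul_le_of_le_one_left (abs_nonneg t) hr.2
  have htriangle := abs_sub_abs_le_abs_sub s (-(r * t))
  rw [sub_neg_eq_add, add_comm, abs_neg] at htriangle
  linarith

theorem integral_abs_mul_add_mul_rpow (α t ω s : ℝ) :
    ∫ r in (0:ℝ)..1, |t * ω * r + ω * s| ^ α = |ω| ^ α * segmentRpowIntegral α t s := by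
  rw [segmentRpowIntegral, ← intervalIntegral.integral_const_mul]
  congr 1 with r
  rw [show t * ω * r + ω * s = ω * (r * t + s) by ring, abs_mul,
    mul_rpow (abs_nonneg _) (abs_nonneg _)]

theorem segmentRpowIntegral_rpow_neg_le (hα : 0 < α) {s : ℝ} (hs : 2 * |t| ≤ |s|)
    (hs1 : 1 ≤ |s|) :
    segmentRpowIntegral α t s ^ (-(2 / α)) ≤ 8 * (1 + s ^ 2)⁻¹ := by
  calc segmentRpowIntegral α t s ^ (-(2 / α))
      ≤ ((|s| / 2) ^ α) ^ (-(2 / α)) :=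
        rpow_le_rpow_of_nonpos (by positivity) (rpow_half_abs_le_segmentRpowIntegral hα.le hs)
          (by simp [hα.le, div_nonneg])
    _ = 4 * (s ^ 2)⁻¹ := by
        rw [← rpow_mul (by positivity), mul_neg, mul_div_cancel₀ _ hα.ne', rpow_neg (by positivity),
          Real.rpow_two, div_pow, sq_abs]
        field_simp
        norm_num
    _ ≤ 8 * (1 + s ^ 2)⁻¹ := by
        have : 1 ≤ s ^ 2 := by nlinarith [sq_abs s]
        rw [← div_eq_mul_inv, ← div_eq_mul_inv, div_le_div_iff₀ (by positivity) (by positivity)]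
        linarith

theorem integrable_segmentRpowIntegral_rpow_neg (hα : 0 < α) (ht : t ≠ 0) :
    Integrable fun s => segmentRpowIntegral α t s ^ (-(2 / α)) := by
  have hcont : Continuous fun s => segmentRpowIntegral α t s ^ (-(2 / α)) :=
    (continuous_segmentRpowIntegral hα.le t).rpow_const
      fun s => Or.inl (segmentRpowIntegral_pos hα.le ht s).ne'
  refine hcont.locallyIntegrable.integrable_of_isBigO_cocompact ?_
    (integrable_inv_one_add_sq.integrableAtFilter _)
  refine Asymptotics.IsBigO.of_bound 8 ?_
  filter_upwards [tendsto_norm_cocompact_atTop.eventually_ge_atTop (max (2 * |t|) 1)] with s hs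
  rw [Real.norm_eq_abs, max_le_iff] at hs
  have hJ_pos := segmentRpowIntegral_pos hα.le ht s
  rw [Real.norm_of_nonneg (by positivity), Real.norm_of_nonneg (by positivity)]
  exact segmentRpowIntegral_rpow_neg_le hα hs.1 hs.2

theorem lintegral_exp_neg_mul_integral_abs_rpow_eq {ω : ℝ} (hω : ω ≠ 0) :
    ∫⁻ l, ENNReal.ofReal (Real.exp (-t * ∫ r in (0:ℝ)..1, |t * ω * r + l| ^ α))
      = ∫⁻ s, ENNReal.ofReal
          (|ω| * Real.exp (-t * (|ω| ^ α * segmentRpowIntegral α t s))) := by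
  rw [lintegral_eq_abs_mul_lintegral_comp_mul_left _ hω, ← lintegral_const_mul' _ _ ofReal_ne_top]
  congr 1 with s
  rw [integral_abs_mul_add_mul_rpow, ofReal_mul (abs_nonneg ω)]

end segmentRpowIntegral

theorem stmt_18_general
    (μ₀ : Measure (ℝ × ℝ)) [IsProbabilityMeasure μ₀]
    (α : ℝ) (hα0 : 0 < α)
    (t : ℝ) (ht : 0 < t)
    (φ : ℝ → ℝ → ℂ)
    (hφ : ∀ ω l : ℝ, φ ω l =
        ∫ p : ℝ × ℝ, Complex.exp (Complex.I * ((ω * (p.1 + p.2 * t) + l * p.2 : ℝ) : ℂ))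
          * Complex.exp (-((t * ∫ r in (0:ℝ)..1, |t * ω * r + l| ^ α : ℝ) : ℂ)) ∂μ₀) :
    (∫⁻ ω : ℝ, ∫⁻ l : ℝ, ‖φ ω l‖₊ ∂volume ∂volume
        ≤ (∫⁻ s : ℝ, ENNReal.ofReal
              ((∫ r in (0:ℝ)..1, |r * t + s| ^ α) ^ (-(2 / α))) ∂volume)
          * (∫⁻ w : ℝ, ENNReal.ofReal (|w| * Real.exp (-t * |w| ^ α)) ∂volume))
    ∧ (∫⁻ s : ℝ, ENNReal.ofReal
          ((∫ r in (0:ℝ)..1, |r * t + s| ^ α) ^ (-(2 / α))) ∂volume)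
        * (∫⁻ w : ℝ, ENNReal.ofReal (|w| * Real.exp (-t * |w| ^ α)) ∂volume) < ⊤ := by
  have hJ_meas := (continuous_segmentRpowIntegral hα0.le t).measurable
  have hJ_pos := segmentRpowIntegral_pos hα0.le ht.ne'
  refine ⟨?_, mul_lt_top (integrable_segmentRpowIntegral_rpow_neg hα0 ht.ne').lintegral_lt_top
    (integrable_abs_mul_exp_neg_mul_abs_rpow hα0 ht).lintegral_lt_top⟩
  have hφ_le (ω l : ℝ) : (‖φ ω l‖₊ : ℝ≥0∞)
      ≤ ENNReal.ofReal (Real.exp (-t * ∫ r in (0:ℝ)..1, |t * ω * r + l| ^ α)) := by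
    rw [← ofReal_coe_nnreal, coe_nnnorm, hφ, neg_mul]
    exact ofReal_le_ofReal (norm_integral_exp_mul_I_mul_exp_neg_le μ₀ _ _)
  have hω : ∀ᵐ ω : ℝ, ω ≠ 0 := measure_eq_zero_iff_ae_notMem.mp (measure_singleton 0)
  calc ∫⁻ ω, ∫⁻ l, ‖φ ω l‖₊
      ≤ ∫⁻ ω, ∫⁻ l, ENNReal.ofReal (Real.exp (-t * ∫ r in (0:ℝ)..1, |t * ω * r + l| ^ α)) :=
        lintegral_mono fun ω => lintegral_mono (hφ_le ω)
    _ = ∫⁻ ω, ∫⁻ s, ENNReal.ofReal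
          (|ω| * Real.exp (-t * (|ω| ^ α * segmentRpowIntegral α t s))) :=
        lintegral_congr_ae (hω.mono fun ω hω => lintegral_exp_neg_mul_integral_abs_rpow_eq hω)
    _ = ∫⁻ s, ∫⁻ ω, ENNReal.ofReal
          (|ω| * Real.exp (-t * (|ω| ^ α * segmentRpowIntegral α t s))) :=
        lintegral_lintegral_swap (by fun_prop)
    _ = ∫⁻ s, ENNReal.ofReal (segmentRpowIntegral α t s ^ (-(2 / α)))
          * ∫⁻ w, ENNReal.ofReal (|w| * Real.exp (-t * |w| ^ α)) :=
        lintegral_congr fun s =>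
          lintegral_abs_mul_comp_abs_rpow_mul (fun y => Real.exp (-t * y)) hα0.ne' (hJ_pos s)
    _ = _ := lintegral_mul_const _ (hJ_meas.pow_const _).ennreal_ofReal

theorem stmt_18
    (μ₀ : Measure (ℝ × ℝ)) [IsProbabilityMeasure μ₀]
    (α : ℝ) (hα0 : 0 < α) (hα2 : α ≤ 2)
    (t : ℝ) (ht : 0 < t)
    (φ : ℝ → ℝ → ℂ)
    (hφ : ∀ ω l : ℝ, φ ω l =
        ∫ p : ℝ × ℝ, Complex.exp (Complex.I * ((ω * (p.1 + p.2 * t) + l * p.2 : ℝ) : ℂ))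
          * Complex.exp (-((t * ∫ r in (0:ℝ)..1, |t * ω * r + l| ^ α : ℝ) : ℂ)) ∂μ₀) :
    (∫⁻ ω : ℝ, ∫⁻ l : ℝ, ‖φ ω l‖₊ ∂volume ∂volume
        ≤ (∫⁻ s : ℝ, ENNReal.ofReal
              ((∫ r in (0:ℝ)..1, |r * t + s| ^ α) ^ (-(2 / α))) ∂volume)
          * (∫⁻ w : ℝ, ENNReal.ofReal (|w| * Real.exp (-t * |w| ^ α)) ∂volume))
    ∧ (∫⁻ s : ℝ, ENNReal.ofReal
          ((∫ r in (0:ℝ)..1, |r * t + s| ^ α) ^ (-(2 / α))) ∂volume)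
        * (∫⁻ w : ℝ, ENNReal.ofReal (|w| * Real.exp (-t * |w| ^ α)) ∂volume) < ⊤ :=
  stmt_18_general μ₀ α hα0 t ht φ hφ
end
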